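/- arXiv:1606.02226 — 4 statements merged into one kernel-verified Lean document; each statement's English description precedes it below -/
import Mathlib

section
/- Let Y be a Hausdorff topological group and G a dense subgroup of Y. Suppose m is a σ-finite, σ-additive Borel measure on Y with values in [0,∞] that is left quasi-invariant relative to G (i.e., for each g ∈ G the measure m^g(A) := m(g⁻¹A) and m are mutually absolutely continuous), and that m(U) > 0 for every nonempty open symmetric subset U = U⁻¹ of Y. Then the Souslin number of Y is countable: every family of pairwise disjoint nonempty open subsets of Y is countable. -/
open MeasureTheory

/-- If a Hausdorff topological group `Y` carries a σ-finite nonnegative Borel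
measure `m` that is left quasi-invariant relative to a dense subgroup `G` (i.e. for each
`g ∈ G` the measure `m^g(A) := m(g⁻¹A)` and `m` are mutually absolutely continuous) and
`m(U) > 0` for every nonempty open symmetric subset `U = U⁻¹` of `Y`, then the Souslin
number of `Y` is countable: every pairwise disjoint family of nonempty open subsets of `Y`
is countable. -/
theorem souslin_number_countable
    {Y : Type*} [Group Y] [TopologicalSpace Y] [IsTopologicalGroup Y] [T2Space Y]
    [MeasurableSpace Y] [BorelSpace Y]
    (G : Subgroup Y) (hG : Dense (G : Set Y))
    (m : Measure Y) (hσ : SigmaFinite m)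
    (hqi : ∀ g ∈ G, m.map (fun y : Y => g * y) ≪ m ∧ m ≪ m.map (fun y : Y => g * y))
    (hpos : ∀ U : Set Y, IsOpen U → U.Nonempty → U⁻¹ = U → 0 < m U) :
    ∀ S : Set (Set Y), (∀ U ∈ S, IsOpen U ∧ U.Nonempty) →
      S.PairwiseDisjoint id → S.Countable := by
  intro S hS hdisj
  -- every member of S has positive measure
  have key : ∀ U ∈ S, 0 < m U := by
    intro U hU
    obtain ⟨hUo, y, hy⟩ := hS U hU
    -- preimage of U under left mult by y is a nhd of 1
    have hU1 : (fun v : Y => y * v) ⁻¹' U ∈ nhds (1 : Y) := by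
      refine (hUo.preimage (continuous_mul_left y)).mem_nhds ?_
      simp [hy]
    obtain ⟨W, W_open, W_mem, hW⟩ := exists_open_nhds_one_mul_subset hU1
    set V : Set Y := W ∩ W⁻¹ with hV
    have V_open : IsOpen V := W_open.inter W_open.inv
    have V_one : (1 : Y) ∈ V := ⟨W_mem, by simpa using W_mem⟩
    have V_symm : V⁻¹ = V := by simp [hV, Set.inter_comm]
    have V_sub : V ⊆ W := Set.inter_subset_left
    have hmV : 0 < m V := hpos V V_open ⟨1, V_one⟩ V_symm
    -- pick g ∈ G inside y • V
    have hyV_open : IsOpen ((fun v : Y => y * v) '' V) :=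
      (Homeomorph.mulLeft y).isOpenMap V V_open
    obtain ⟨g, hgG, w, hwV, hgw⟩ :=
      hG.exists_mem_open hyV_open ⟨y * 1, Set.mem_image_of_mem _ V_one⟩
    -- g • V ⊆ U
    have hsub : (fun v : Y => g * v) '' V ⊆ U := by
      rintro _ ⟨v, hvV, rfl⟩
      have : w * v ∈ (fun v : Y => y * v) ⁻¹' U := hW ⟨w, V_sub hwV, v, V_sub hvV, rfl⟩
      simpa [← hgw, mul_assoc] using this
    -- g • V has positive measure
    have hmeas : MeasurableSet ((fun v : Y => g * v) '' V) :=
      ((Homeomorph.mulLeft g).isOpenMap V V_open).measurableSet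
    have hmap : m.map (fun y : Y => g * y) ((fun v : Y => g * v) '' V) = m V := by
      rw [Measure.map_apply (measurable_const_mul g) hmeas,
        Set.preimage_image_eq V (mul_right_injective g)]
    have hgV : 0 < m ((fun v : Y => g * v) '' V) := by
      rcases pos_iff_ne_zero.mp hmV with hne
      rw [pos_iff_ne_zero]
      intro h0
      exact hne (hmap ▸ (hqi g hgG).1 h0)
    exact hgV.trans_le (measure_mono hsub)
  -- now apply the countability of positive-measure disjoint families
  have : Set.Countable {U : S | 0 < m (U : Set Y)} := by
    apply Measure.countable_meas_pos_of_disjoint_iUnion (μ := m)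
      (As := fun U : S => (U : Set Y))
    · exact fun U => (hS U U.2).1.measurableSet
    · intro U V hUV
      exact hdisj U.2 V.2 (fun h => hUV (Subtype.ext h))
  have hall : {U : S | 0 < m (U : Set Y)} = Set.univ := by
    ext U; simp [key U U.2]
  rw [hall, Set.countable_univ_iff] at this
  exact Set.countable_coe_iff.mp this
end

section
/- Let X be a metrizable topological space, G a group acting on X by homeomorphisms, d : G × X → ℝ a function satisfying conditions (1)–(3) and continuous in x for each g ∈ G, and m a finite nonnegative Borel measure on X. Then the following are equivalent: (i) for every bounded continuous f : X → ℝ and every continuous h : X → ℝ with f Υ_d h, the function h is m-integrable and ∫_X f dm = ∫_X h dm; (ii) for every g ∈ G the measures m^g (where m^g(A) = m(g⁻¹A)) and m are mutually absolutely continuous with Radon–Nikodym derivative dm^g/dm(x) = d(g,x) for m-almost every x. -/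
open MeasureTheory
open scoped NNReal ENNReal BoundedContinuousFunction

/-- Let `X` be metrizable, `G` act on `X` by homeomorphisms, `d : G × X → ℝ`
satisfy the cocycle conditions (1)–(3) and be continuous in `x` for each `g`, and let `m` be a
finite nonnegative Borel measure on `X`. Then the following are equivalent:
(i) whenever `f` is bounded continuous, `h` is continuous and `f Υ_d h`, the function `h` is
`m`-integrable and `∫ f dm = ∫ h dm`;
(ii) for each `g ∈ G` the measures `m^g` and `m` are mutually absolutely continuous with
`dm^g/dm(x) = d(g,x)` for `m`-a.e. `x`. -/
theorem upsilon_integral_iff_quasiInvariant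
    {G X : Type*} [Group G] [MulAction G X]
    [TopologicalSpace X] [TopologicalSpace.MetrizableSpace X]
    [MeasurableSpace X] [BorelSpace X]
    (hcont : ∀ g : G, Continuous (fun x : X => g • x))
    (d : G → X → ℝ)
    (hdc : ∀ g : G, Continuous (d g))
    (hd1 : ∀ x : X, d 1 x = 1)
    (hd0 : ∀ (g : G) (x : X), d g x ≠ 0)
    (hdcoc : ∀ (s g : G) (x : X), d (s * g) x = d g (s⁻¹ • x) * d s x)
    (m : Measure X) [IsFiniteMeasure m] :
    (∀ (f : BoundedContinuousFunction X ℝ) (h : C(X, ℝ)),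
        (∃ g : G, ∀ x : X, f x = d g x * h (g⁻¹ • x)) →
        Integrable h m ∧ (∫ x, f x ∂m) = ∫ x, h x ∂m) ↔
    (∀ g : G,
      (m.map (fun x : X => g • x) ≪ m ∧ m ≪ m.map (fun x : X => g • x)) ∧
      (m.map (fun x : X => g • x)).rnDeriv m =ᵐ[m] fun x => ENNReal.ofReal (d g x)) := by
  have hrel : ∀ (g : G) (x : X), d g (g • x) * d g⁻¹ x = 1 := by
    intro g x
    have h := hdcoc g⁻¹ g x
    rw [inv_mul_cancel, hd1, inv_inv] at h
    exact h.symm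
  constructor
  · intro H
    -- Key consequence of (i): change of variables formula for bounded continuous test functions.
    have key : ∀ (g : G) (ψ : X →ᵇ ℝ),
        Integrable (fun y => ψ y * d g y) m ∧
        (∫ x, ψ (g • x) ∂m) = ∫ y, ψ y * d g y ∂m := by
      intro g ψ
      have hmain := H (ψ.compContinuous ⟨fun x => g • x, hcont g⟩)
        ⟨fun y => ψ y * d g y, ψ.continuous.mul (hdc g)⟩ ⟨g⁻¹, ?_⟩
      · exact hmain
      · intro x
        show ψ (g • x) = d g⁻¹ x * (ψ ((g⁻¹)⁻¹ • x) * d g ((g⁻¹)⁻¹ • x))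
        rw [inv_inv,
          show d g⁻¹ x * (ψ (g • x) * d g (g • x))
            = ψ (g • x) * (d g (g • x) * d g⁻¹ x) by ring, hrel, mul_one]
    -- Almost-everywhere nonnegativity of the cocycle.
    have hpos : ∀ g : G, ∀ᵐ y ∂m, 0 ≤ d g y := by
      intro g
      set q : X → ℝ := fun y => min (max (-(d g y)) 0) 1 with hq
      have hq0 : ∀ y, 0 ≤ q y := fun y => le_min (le_max_right _ _) zero_le_one
      have hq1 : ∀ y, q y ≤ 1 := fun y => min_le_right _ _
      set ψ₀ : X →ᵇ ℝ :=
        ⟨⟨q, (((hdc g).neg.max continuous_const).min continuous_const)⟩, 1, fun x y => by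
          rw [Real.dist_eq, abs_sub_le_iff]
          constructor <;> · have := hq0 x; have := hq0 y; have := hq1 x; have := hq1 y; linarith⟩
        with hψ₀
      obtain ⟨hint, heqI⟩ := key g ψ₀
      have h1 : 0 ≤ ∫ x, ψ₀ (g • x) ∂m := integral_nonneg fun x => hq0 _
      have h2 : ∀ y, ψ₀ y * d g y ≤ 0 := by
        intro y
        rcases le_or_gt 0 (d g y) with hdy | hdy
        · have hz : q y = 0 := by
            rw [hq]
            simp only []
            rw [max_eq_right (neg_nonpos.mpr hdy)]
            exact min_eq_left zero_le_one
          show q y * d g y ≤ 0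
          rw [hz, zero_mul]
        · exact mul_nonpos_of_nonneg_of_nonpos (hq0 y) hdy.le
      have h3 : ∫ y, ψ₀ y * d g y ∂m ≤ 0 := integral_nonpos h2
      have h4 : ∫ y, ψ₀ y * d g y ∂m = 0 := le_antisymm h3 (heqI ▸ h1)
      have h5 : (fun y => -(ψ₀ y * d g y)) =ᵐ[m] 0 := by
        rw [← integral_eq_zero_iff_of_nonneg (fun y => neg_nonneg.mpr (h2 y)) hint.neg]
        rw [integral_neg, h4, neg_zero]
      filter_upwards [h5] with y hy
      by_contra hlt
      push_neg at hlt
      have hqpos : 0 < q y := lt_min (lt_max_of_lt_left (by linarith)) one_pos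
      have : ψ₀ y * d g y < 0 := mul_neg_of_pos_of_neg hqpos hlt
      simp only [Pi.zero_apply, neg_eq_zero] at hy
      rw [hy] at this
      exact lt_irrefl 0 this
    -- The pushforward measure equals the density measure.
    have heq : ∀ g : G,
        m.map (fun x : X => g • x) = m.withDensity (fun y => ENNReal.ofReal (d g y)) := by
      intro g
      have hgm : Measurable (fun x : X => g • x) := (hcont g).measurable
      have hde : Measurable (fun y => ENNReal.ofReal (d g y)) :=
        (hdc g).measurable.ennreal_ofReal
      refine ext_of_forall_lintegral_eq_of_IsFiniteMeasure ?_
      intro f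
      obtain ⟨C, hC⟩ := f.map_bounded'
      set ψ : X →ᵇ ℝ :=
        ⟨⟨fun x => (f x : ℝ), NNReal.continuous_coe.comp f.continuous⟩, C, fun x y => by
          rw [Real.dist_eq, ← NNReal.dist_eq]; exact hC x y⟩ with hψdef
      obtain ⟨hint, hkey⟩ := key g ψ
      have hmeas_f : Measurable (fun x : X => (f x : ℝ≥0∞)) :=
        (ENNReal.continuous_coe.comp f.continuous).measurable
      have hint1 : Integrable (fun x => ψ (g • x)) m :=
        (ψ.compContinuous ⟨fun x => g • x, hcont g⟩).integrable m
      calc ∫⁻ x, f x ∂(m.map (fun x : X => g • x))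
          = ∫⁻ x, (f (g • x) : ℝ≥0∞) ∂m := lintegral_map hmeas_f hgm
        _ = ∫⁻ x, ENNReal.ofReal (ψ (g • x)) ∂m :=
            lintegral_congr fun x => ENNReal.ofReal_coe_nnreal.symm
        _ = ENNReal.ofReal (∫ x, ψ (g • x) ∂m) :=
            (ofReal_integral_eq_lintegral_ofReal hint1
              (Filter.Eventually.of_forall fun x => (f (g • x)).coe_nonneg)).symm
        _ = ENNReal.ofReal (∫ y, ψ y * d g y ∂m) := by rw [hkey]
        _ = ∫⁻ y, ENNReal.ofReal (ψ y * d g y) ∂m := by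
            refine ofReal_integral_eq_lintegral_ofReal hint ?_
            filter_upwards [hpos g] with y hy
            exact mul_nonneg (f y).coe_nonneg hy
        _ = ∫⁻ y, ENNReal.ofReal (d g y) * (f y : ℝ≥0∞) ∂m := by
            refine lintegral_congr_ae ?_
            filter_upwards [hpos g] with y hy
            rw [ENNReal.ofReal_mul (show (0:ℝ) ≤ ψ y from (f y).coe_nonneg), mul_comm]
            congr 1
            exact ENNReal.ofReal_coe_nnreal
        _ = ∫⁻ y, (f y : ℝ≥0∞) ∂(m.withDensity fun y => ENNReal.ofReal (d g y)) := by
            rw [lintegral_withDensity_eq_lintegral_mul m hde hmeas_f]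
            rfl
    intro g
    have hde : Measurable (fun y => ENNReal.ofReal (d g y)) :=
      (hdc g).measurable.ennreal_ofReal
    refine ⟨⟨?_, ?_⟩, ?_⟩
    · rw [heq g]; exact withDensity_absolutelyContinuous m _
    · rw [heq g]
      refine withDensity_absolutelyContinuous' hde.aemeasurable ?_
      filter_upwards [hpos g] with y hy
      have : 0 < d g y := lt_of_le_of_ne hy (Ne.symm (hd0 g y))
      simp [ENNReal.ofReal_eq_zero, not_le, this]
    · rw [heq g]; exact Measure.rnDeriv_withDensity m hde
  · rintro K f h ⟨g, hf⟩
    obtain ⟨⟨hac1, hac2⟩, hrn⟩ := K g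
    have hgm : Measurable (fun x : X => g • x) := (hcont g).measurable
    have heq : m.map (fun x : X => g • x) = m.withDensity (fun y => ENNReal.ofReal (d g y)) :=
      (Measure.withDensity_rnDeriv_eq _ _ hac1).symm.trans (withDensity_congr_ae hrn)
    have hposg : ∀ᵐ x ∂m, 0 < d g x := by
      have hA : MeasurableSet {x : X | d g x ≤ 0} :=
        measurableSet_le (hdc g).measurable measurable_const
      have hzero : (m.map (fun x : X => g • x)) {x : X | d g x ≤ 0} = 0 := by
        rw [heq, withDensity_apply _ hA]
        rw [setLIntegral_congr_fun hA
          (fun x (hx : d g x ≤ 0) => show ENNReal.ofReal (d g x) = 0 by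
            simpa [ENNReal.ofReal_eq_zero] using hx)]
        simp
      have hm0 := hac2 hzero
      rw [ae_iff]
      simpa [not_lt] using hm0
    have hψmeas : AEMeasurable (fun x => (d g x).toNNReal) m :=
      (continuous_real_toNNReal.comp (hdc g)).measurable.aemeasurable
    have hwd : m.withDensity (fun y => ENNReal.ofReal (d g y))
        = m.withDensity (fun y => ((d g y).toNNReal : ℝ≥0∞)) := rfl
    have hfm_int : Integrable (fun x => f x) m := f.integrable m
    have hsmul_ae : (fun x => (d g x).toNNReal • h (g⁻¹ • x)) =ᵐ[m] fun x => f x := by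
      filter_upwards [hposg] with x hx
      rw [NNReal.smul_def, Real.coe_toNNReal _ hx.le, smul_eq_mul, ← hf x]
    have hint_phi : Integrable (fun y => h (g⁻¹ • y)) (m.map fun x : X => g • x) := by
      rw [heq, hwd, integrable_withDensity_iff_integrable_smul₀ hψmeas]
      exact hfm_int.congr hsmul_ae.symm
    have hphi_sm : AEStronglyMeasurable (fun y => h (g⁻¹ • y)) (m.map fun x : X => g • x) :=
      (h.continuous.comp (hcont g⁻¹)).aestronglyMeasurable
    have hint_h : Integrable h m := by
      have := (integrable_map_measure hphi_sm hgm.aemeasurable).mp hint_phi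
      have hcongr : ((fun y => h (g⁻¹ • y)) ∘ fun x : X => g • x) = fun x => h x := by
        funext x; simp [Function.comp, inv_smul_smul]
      rw [hcongr] at this
      exact this
    refine ⟨hint_h, ?_⟩
    calc ∫ x, f x ∂m
        = ∫ x, (d g x).toNNReal • h (g⁻¹ • x) ∂m := (integral_congr_ae hsmul_ae).symm
      _ = ∫ y, h (g⁻¹ • y) ∂(m.withDensity fun y => ((d g y).toNNReal : ℝ≥0∞)) :=
          (integral_withDensity_eq_integral_smul₀ hψmeas _).symm
      _ = ∫ y, h (g⁻¹ • y) ∂(m.map fun x : X => g • x) := by rw [← hwd, ← heq]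
      _ = ∫ x, h (g⁻¹ • (g • x)) ∂m := integral_map hgm.aemeasurable hphi_sm
      _ = ∫ x, h x ∂m := by simp [inv_smul_smul]
end

section
/- Let X be a separable metrizable topological space and G a group acting on X by homeomorphisms such that ⋃_{g∈G} gU = X for every nonempty open subset U of X. Suppose there exists a nonzero finite nonnegative Borel measure on X that is quasi-invariant relative to G. Then the family Q⁺(X) of all finite nonnegative Borel measures on X that are quasi-invariant relative to G is dense in the space M⁺(X) of all finite nonnegative Borel measures on X equipped with the weak topology τ_w. -/
open MeasureTheory TopologicalSpace

/-- The usual weak topology `τ_w` on the space of finite nonnegative Borel measures,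
generated by the sets `{ m : |∫ f dm − ∫ f dm₀| < y }` with `f` ranging over finitely many
bounded continuous functions and `y > 0`. -/
def tauW (X : Type*) [TopologicalSpace X] [MeasurableSpace X] :
    TopologicalSpace (FiniteMeasure X) :=
  TopologicalSpace.generateFrom
    {S | ∃ (m₀ : FiniteMeasure X) (F : Finset (BoundedContinuousFunction X ℝ)) (y : ℝ),
      0 < y ∧ S = {m : FiniteMeasure X | ∀ f ∈ F,
        |(∫ x, f x ∂(m : Measure X)) - ∫ x, f x ∂(m₀ : Measure X)| < y}}

open Metric Filter
open scoped BoundedContinuousFunction ENNReal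
set_option linter.unusedSectionVars false
set_option maxHeartbeats 1000000

section Helpers
variable {X : Type*} [MetricSpace X] [MeasurableSpace X] [BorelSpace X]
  [SecondCountableTopology X]

noncomputable def qidKappa (m : Measure X) (r : ℝ) (x : X) : Measure X :=
  (m (ball x r))⁻¹ • m.restrict (ball x r)

lemma qid_meas_inter_ball (m : Measure X) [SFinite m] {s : Set X}
    (hs : MeasurableSet s) (r : ℝ) :
    Measurable fun x : X => m (s ∩ ball x r) := by
  have hS : MeasurableSet {p : X × X | p.2 ∈ s ∧ dist p.2 p.1 < r} := by
    refine (measurable_snd hs).inter ?_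
    exact (isOpen_lt (continuous_snd.dist continuous_fst) continuous_const).measurableSet
  have h := measurable_measure_prodMk_left (ν := m) hS
  have key : ∀ x : X, (Prod.mk x ⁻¹' {p : X × X | p.2 ∈ s ∧ dist p.2 p.1 < r})
      = s ∩ ball x r := by
    intro x; ext y; simp [Metric.mem_ball]
  simpa only [key] using h

lemma qid_meas_ball (m : Measure X) [SFinite m] (r : ℝ) :
    Measurable fun x : X => m (ball x r) := by
  simpa [Set.univ_inter] using qid_meas_inter_ball m MeasurableSet.univ r

lemma qidKappa_measurable (m : Measure X) [SFinite m] (r : ℝ) :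
    Measurable (qidKappa m r) := by
  refine Measure.measurable_measure.2 fun s hs => ?_
  simp only [qidKappa, Measure.smul_apply, Measure.restrict_apply hs, smul_eq_mul]
  exact (qid_meas_ball m r).inv.mul (qid_meas_inter_ball m hs r)

lemma qidKappa_prob (m : Measure X) [IsFiniteMeasure m] {r : ℝ} {x : X}
    (h0 : m (ball x r) ≠ 0) : IsProbabilityMeasure (qidKappa m r x) := by
  constructor
  simp only [qidKappa, Measure.smul_apply, Measure.restrict_apply_univ, smul_eq_mul]
  exact ENNReal.inv_mul_cancel h0 (measure_ne_top m _)

noncomputable def qidAvg (m : Measure X) (r : ℝ) (f : X → ℝ) (x : X) : ℝ :=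
  ∫ y, f y ∂(qidKappa m r x)

lemma qidAvg_stronglyMeasurable (m : Measure X) [IsFiniteMeasure m] (r : ℝ)
    (f : X →ᵇ ℝ) : StronglyMeasurable (qidAvg m r f) := by
  have hball : Measurable fun x : X => m (ball x r) := qid_meas_ball m r
  have h1 : Measurable fun x : X => (m (ball x r))⁻¹.toReal :=
    (hball.inv).ennreal_toReal
  have h2 : StronglyMeasurable fun x : X => ∫ y in ball x r, f y ∂m := by
    have hset : MeasurableSet {p : X × X | dist p.2 p.1 < r} :=
      (isOpen_lt (continuous_snd.dist continuous_fst) continuous_const).measurableSet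
    have hsm : StronglyMeasurable fun p : X × X =>
        Set.indicator {p : X × X | dist p.2 p.1 < r} (fun p => f p.2) p :=
      ((f.continuous.comp continuous_snd).stronglyMeasurable).indicator hset
    have h := hsm.integral_prod_right' (ν := m)
    have key : ∀ x : X, (∫ y in ball x r, f y ∂m)
        = ∫ y, Set.indicator {p : X × X | dist p.2 p.1 < r} (fun p => f p.2) (x, y) ∂m := by
      intro x
      rw [← integral_indicator measurableSet_ball]
      congr 1
    simp_rw [key]
    exact h
  have : qidAvg m r f = fun x => (m (ball x r))⁻¹.toReal • ∫ y in ball x r, f y ∂m := by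
    funext x
    simp only [qidAvg, qidKappa, integral_smul_measure]
  rw [this]
  exact (h1.stronglyMeasurable).smul h2

lemma qidAvg_norm_le (m : Measure X) [IsFiniteMeasure m] {r : ℝ} {x : X}
    (h0 : m (ball x r) ≠ 0) (f : X →ᵇ ℝ) : ‖qidAvg m r f x‖ ≤ ‖f‖ := by
  haveI : IsProbabilityMeasure (qidKappa m r x) := qidKappa_prob m h0
  calc ‖qidAvg m r f x‖ ≤ ‖f‖ * ((qidKappa m r x) Set.univ).toReal := by
        refine norm_integral_le_of_norm_le_const ?_
        exact Filter.Eventually.of_forall fun y => f.norm_coe_le_norm y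
    _ = ‖f‖ := by simp

lemma qidAvg_sub_le (m : Measure X) [IsFiniteMeasure m] {r : ℝ} {x : X}
    (h0 : m (ball x r) ≠ 0) (f : X →ᵇ ℝ) {ε : ℝ}
    (hε : ∀ y ∈ ball x r, |f y - f x| ≤ ε) : |qidAvg m r f x - f x| ≤ ε := by
  haveI : IsProbabilityMeasure (qidKappa m r x) := qidKappa_prob m h0
  have hconst : (∫ _, f x ∂(qidKappa m r x)) = f x := by simp
  have hsub : qidAvg m r f x - f x = ∫ y, (f y - f x) ∂(qidKappa m r x) := by
    have h' := integral_sub (f.integrable (qidKappa m r x)) (integrable_const (f x))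
    rw [hconst] at h'
    exact h'.symm
  have hae : ∀ᵐ y ∂(qidKappa m r x), ‖f y - f x‖ ≤ ε := by
    have hmem : ∀ᵐ y ∂(qidKappa m r x), y ∈ ball x r :=
      Measure.ae_smul_measure_le _ (ae_restrict_mem measurableSet_ball)
    filter_upwards [hmem] with y hy
    simpa [Real.norm_eq_abs] using hε y hy
  calc |qidAvg m r f x - f x| = ‖∫ y, (f y - f x) ∂(qidKappa m r x)‖ := by
        rw [hsub, Real.norm_eq_abs]
    _ ≤ ε * ((qidKappa m r x) Set.univ).toReal := norm_integral_le_of_norm_le_const hae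
    _ = ε := by simp

lemma qidBind_univ (m : Measure X) [IsFiniteMeasure m] (μ : Measure X)
    {r : ℝ} (hm : ∀ x : X, m (ball x r) ≠ 0) :
    (μ.bind (qidKappa m r)) Set.univ = μ Set.univ := by
  rw [Measure.bind_apply MeasurableSet.univ (qidKappa_measurable m r).aemeasurable]
  have : ∀ x : X, qidKappa m r x Set.univ = 1 := fun x => (qidKappa_prob m (hm x)).measure_univ
  simp [this]

lemma qidBind_isFiniteMeasure (m : Measure X) [IsFiniteMeasure m] (μ : Measure X)
    [IsFiniteMeasure μ] {r : ℝ} (hm : ∀ x : X, m (ball x r) ≠ 0) :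
    IsFiniteMeasure (μ.bind (qidKappa m r)) := by
  constructor
  rw [qidBind_univ m μ hm]
  exact measure_lt_top μ _

lemma qid_integral_bind (m : Measure X) [IsFiniteMeasure m] (μ : Measure X)
    [IsFiniteMeasure μ] {r : ℝ} (hm : ∀ x : X, m (ball x r) ≠ 0) (f : X →ᵇ ℝ) :
    ∫ y, f y ∂(μ.bind (qidKappa m r)) = ∫ x, qidAvg m r f x ∂μ := by
  haveI hprob : ∀ x : X, IsProbabilityMeasure (qidKappa m r x) :=
    fun x => qidKappa_prob m (hm x)
  haveI := qidBind_isFiniteMeasure m μ hm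
  set ν' := μ.bind (qidKappa m r) with hν'
  set c := ‖f‖ with hc
  -- the nonnegative function g = f + c
  have hg_nonneg : ∀ y : X, 0 ≤ f y + c := fun y => by
    have := abs_le.1 (f.norm_coe_le_norm y) |>.1
    dsimp [c]; linarith [(abs_le.1 (by simpa [Real.norm_eq_abs] using f.norm_coe_le_norm y)).1]
  have hg_cont : Continuous fun y : X => f y + c := f.continuous.add continuous_const
  have hAvg_norm : ∀ x : X, ‖qidAvg m r f x‖ ≤ c := fun x => qidAvg_norm_le m (hm x) f
  -- step 1: lintegral over bind
  have hmeas_g : Measurable fun y : X => ENNReal.ofReal (f y + c) :=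
    ENNReal.measurable_ofReal.comp hg_cont.measurable
  have step1 : (∫⁻ y, ENNReal.ofReal (f y + c) ∂ν')
      = ∫⁻ x, ∫⁻ y, ENNReal.ofReal (f y + c) ∂(qidKappa m r x) ∂μ :=
    Measure.lintegral_bind (qidKappa_measurable m r).aemeasurable hmeas_g.aemeasurable
  -- step 2: inner lintegral
  have step2 : ∀ x : X, (∫⁻ y, ENNReal.ofReal (f y + c) ∂(qidKappa m r x))
      = ENNReal.ofReal (qidAvg m r f x + c) := by
    intro x
    have hint : Integrable (fun y : X => f y + c) (qidKappa m r x) :=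
      (f.integrable _).add (integrable_const c)
    rw [← ofReal_integral_eq_lintegral_ofReal hint
      (Filter.Eventually.of_forall hg_nonneg)]
    congr 1
    rw [integral_add (f.integrable _) (integrable_const c)]
    simp [qidAvg]
  -- step 3: outer : lintegral to integral
  have hAvg_sm : StronglyMeasurable (qidAvg m r f) := qidAvg_stronglyMeasurable m r f
  have hAvg_int : Integrable (fun x => qidAvg m r f x + c) μ := by
    refine ⟨(hAvg_sm.add stronglyMeasurable_const).aestronglyMeasurable, ?_⟩
    refine HasFiniteIntegral.of_bounded (C := c + c) ?_
    refine Filter.Eventually.of_forall fun x => ?_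
    have h1 := hAvg_norm x
    have : ‖qidAvg m r f x + c‖ ≤ ‖qidAvg m r f x‖ + ‖c‖ := norm_add_le _ _
    have hc0 : 0 ≤ c := norm_nonneg f
    calc ‖qidAvg m r f x + c‖ ≤ ‖qidAvg m r f x‖ + ‖c‖ := norm_add_le _ _
      _ ≤ c + c := by rw [Real.norm_eq_abs (c), abs_of_nonneg hc0]; linarith
  have hAvg_nonneg : ∀ x : X, 0 ≤ qidAvg m r f x + c := fun x => by
    have := (abs_le.1 (by simpa [Real.norm_eq_abs] using hAvg_norm x)).1
    linarith
  have step3 : (∫⁻ x, ENNReal.ofReal (qidAvg m r f x + c) ∂μ)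
      = ENNReal.ofReal (∫ x, (qidAvg m r f x + c) ∂μ) :=
    (ofReal_integral_eq_lintegral_ofReal hAvg_int
      (Filter.Eventually.of_forall hAvg_nonneg)).symm
  -- assemble
  have hg_int : Integrable (fun y : X => f y + c) ν' := (f.integrable _).add (integrable_const c)
  have lhs : ∫ y, (f y + c) ∂ν' = (∫⁻ y, ENNReal.ofReal (f y + c) ∂ν').toReal := by
    rw [integral_eq_lintegral_of_nonneg_ae (Filter.Eventually.of_forall hg_nonneg)
      hg_cont.aestronglyMeasurable]
  have rhs : ∫ y, (f y + c) ∂ν' = (∫ y, f y ∂ν') + c * (ν' Set.univ).toReal := by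
    rw [integral_add (f.integrable _) (integrable_const c), integral_const]
    ring_nf
    simp [smul_eq_mul, mul_comm, Measure.real]
  have hAvg_int' : Integrable (qidAvg m r f) μ :=
    ⟨hAvg_sm.aestronglyMeasurable,
      HasFiniteIntegral.of_bounded (C := c) (Filter.Eventually.of_forall hAvg_norm)⟩
  have rhs2 : ∫ x, (qidAvg m r f x + c) ∂μ
      = (∫ x, qidAvg m r f x ∂μ) + c * (μ Set.univ).toReal := by
    rw [integral_add hAvg_int' (integrable_const c), integral_const]
    ring_nf
    simp [smul_eq_mul, mul_comm, Measure.real]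
  have huniv : ν' Set.univ = μ Set.univ := qidBind_univ m μ hm
  have chain : (∫ y, (f y + c) ∂ν') = ∫ x, (qidAvg m r f x + c) ∂μ := by
    rw [lhs, step1]
    simp_rw [step2]
    rw [step3, ENNReal.toReal_ofReal (integral_nonneg hAvg_nonneg)]
  rw [rhs, rhs2, huniv] at chain
  linarith [chain]

lemma qid_tendsto_integral_bind (m : Measure X) [IsFiniteMeasure m] (μ : Measure X)
    [IsFiniteMeasure μ] (hm : ∀ (x : X) (r : ℝ), 0 < r → m (ball x r) ≠ 0) (f : X →ᵇ ℝ) :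
    Tendsto (fun n : ℕ => ∫ y, f y ∂(μ.bind (qidKappa m (1 / (n + 1)))))
      atTop (nhds (∫ y, f y ∂μ)) := by
  have hr : ∀ n : ℕ, (0:ℝ) < 1 / (n + 1) := fun n => by positivity
  have heq : ∀ n : ℕ, (∫ y, f y ∂(μ.bind (qidKappa m (1 / (n + 1)))))
      = ∫ x, qidAvg m (1 / (n + 1)) f x ∂μ :=
    fun n => qid_integral_bind m μ (fun x => hm x _ (hr n)) f
  simp_rw [heq]
  refine tendsto_integral_of_dominated_convergence (bound := fun _ => ‖f‖)
    (fun n => (qidAvg_stronglyMeasurable m _ f).aestronglyMeasurable)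
    (integrable_const _) ?_ ?_
  · intro n
    exact Filter.Eventually.of_forall fun x => qidAvg_norm_le m (hm x _ (hr n)) f
  · refine Filter.Eventually.of_forall fun x => ?_
    rw [Metric.tendsto_atTop]
    intro ε hε
    obtain ⟨δ, hδ, hf⟩ := Metric.continuousAt_iff.1 (f.continuous.continuousAt (x := x))
      (ε / 2) (by linarith)
    obtain ⟨N, hN⟩ := exists_nat_one_div_lt hδ
    refine ⟨N, fun n hn => ?_⟩
    have hrn : (1:ℝ) / (n + 1) ≤ 1 / (N + 1) := by
      apply one_div_le_one_div_of_le (by positivity)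
      have : (N:ℝ) ≤ n := Nat.cast_le.2 hn
      linarith
    have hsub : ∀ y ∈ ball x (1 / (n + 1)), |f y - f x| ≤ ε / 2 := by
      intro y hy
      have : dist y x < δ := lt_of_lt_of_le (lt_of_lt_of_le hy hrn) (le_of_lt hN)
      have := hf this
      rw [Real.dist_eq] at this
      linarith [this]
    have := qidAvg_sub_le m (hm x _ (hr n)) f hsub
    rw [Real.dist_eq]
    calc |qidAvg m (1 / (↑n + 1)) (⇑f) x - f x| ≤ ε / 2 := this
      _ < ε := by linarith

/-- Key approximation lemma. -/
lemma qid_key (m : Measure X) [IsFiniteMeasure m]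
    (hm : ∀ (x : X) (r : ℝ), 0 < r → m (ball x r) ≠ 0)
    (μ : Measure X) [IsFiniteMeasure μ] (F : Finset (X →ᵇ ℝ)) {ε : ℝ} (hε : 0 < ε) :
    ∃ ν : Measure X, IsFiniteMeasure ν ∧ ν ≪ m ∧ m ≪ ν ∧
      ∀ f ∈ F, |(∫ y, f y ∂ν) - ∫ y, f y ∂μ| < ε := by
  classical
  set C : ℝ := 1 + ∑ f ∈ F, |∫ y, f y ∂m| with hC
  have hC0 : 0 < C := by
    have : (0:ℝ) ≤ ∑ f ∈ F, |∫ y, f y ∂m| := Finset.sum_nonneg fun f _ => abs_nonneg _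
    rw [hC]; linarith
  set t : ℝ := ε / (2 * C) with ht
  have ht0 : 0 < t := by positivity
  -- choose n such that all f ∈ F are within ε/2
  have hev : ∀ᶠ n : ℕ in atTop, ∀ f ∈ F,
      |(∫ y, f y ∂(μ.bind (qidKappa m (1 / (n + 1))))) - ∫ y, f y ∂μ| < ε / 2 := by
    rw [Filter.eventually_all_finset]
    intro f hf
    have := qid_tendsto_integral_bind m μ hm f
    have h2 := Metric.tendsto_atTop.1 this (ε / 2) (by linarith)
    obtain ⟨N, hN⟩ := h2
    refine Filter.eventually_atTop.2 ⟨N, fun n hn => ?_⟩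
    have := hN n hn
    rwa [Real.dist_eq] at this
  obtain ⟨n, hn⟩ := hev.exists
  set r : ℝ := 1 / (n + 1) with hrdef
  have hr : (0:ℝ) < r := by positivity
  have hball : ∀ x : X, m (ball x r) ≠ 0 := fun x => hm x r hr
  haveI := qidBind_isFiniteMeasure m μ hball
  set ν : Measure X := μ.bind (qidKappa m r) + ENNReal.ofReal t • m with hν
  have htne : ENNReal.ofReal t ≠ 0 := by
    simp [ENNReal.ofReal_eq_zero, not_le, ht0]
  refine ⟨ν, ?_, ?_, ?_, ?_⟩
  · constructor
    rw [hν]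
    simp only [Measure.coe_add, Pi.add_apply, Measure.smul_apply, smul_eq_mul]
    have h1 : (μ.bind (qidKappa m r)) Set.univ < ⊤ := measure_lt_top _ _
    have h2 : ENNReal.ofReal t * m Set.univ < ⊤ :=
      ENNReal.mul_lt_top ENNReal.ofReal_lt_top (measure_lt_top m _)
    exact ENNReal.add_lt_top.2 ⟨h1, h2⟩
  · -- ν ≪ m
    refine Measure.AbsolutelyContinuous.mk fun s hs hs0 => ?_
    rw [hν]
    simp only [Measure.coe_add, Pi.add_apply, Measure.smul_apply, smul_eq_mul]
    have hb : (μ.bind (qidKappa m r)) s = 0 := by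
      rw [Measure.bind_apply hs (qidKappa_measurable m r).aemeasurable]
      have : ∀ x : X, qidKappa m r x s = 0 := by
        intro x
        simp only [qidKappa, Measure.smul_apply, Measure.restrict_apply hs, smul_eq_mul]
        have : m (s ∩ ball x r) = 0 :=
          le_antisymm (le_trans (measure_mono Set.inter_subset_left) hs0.le) (zero_le)
        simp [this]
      simp [this]
    rw [hb, hs0]
    simp
  · -- m ≪ ν
    refine Measure.AbsolutelyContinuous.mk fun s hs hs0 => ?_
    rw [hν] at hs0
    simp only [Measure.coe_add, Pi.add_apply, Measure.smul_apply, smul_eq_mul,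
      add_eq_zero, mul_eq_zero] at hs0
    rcases hs0.2 with h | h
    · exact absurd h htne
    · exact h
  · intro f hf
    haveI : IsFiniteMeasure ((ENNReal.ofReal t) • m) := by
      constructor
      simp only [Measure.smul_apply, smul_eq_mul]
      exact ENNReal.mul_lt_top ENNReal.ofReal_lt_top (measure_lt_top m _)
    have hsplit : (∫ y, f y ∂ν)
        = (∫ y, f y ∂(μ.bind (qidKappa m r))) + ∫ y, f y ∂((ENNReal.ofReal t) • m) := by
      rw [hν]
      exact integral_add_measure (f.integrable _) (f.integrable _)
    have hsmul : (∫ y, f y ∂((ENNReal.ofReal t) • m)) = t * ∫ y, f y ∂m := by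
      rw [integral_smul_measure, ENNReal.toReal_ofReal ht0.le, smul_eq_mul]
    have habs : |∫ y, f y ∂m| ≤ C - 1 := by
      rw [hC]
      have : |∫ y, f y ∂m| ≤ ∑ g ∈ F, |∫ y, g y ∂m| :=
        Finset.single_le_sum (f := fun g : X →ᵇ ℝ => |∫ y, g y ∂m|)
          (fun g _ => abs_nonneg _) hf
      linarith
    have h2 : |t * ∫ y, f y ∂m| ≤ ε / 2 := by
      rw [abs_mul, abs_of_nonneg ht0.le, ht]
      calc ε / (2 * C) * |∫ y, f y ∂m| ≤ ε / (2 * C) * C := by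
            apply mul_le_mul_of_nonneg_left _ (by positivity)
            linarith
        _ = ε / 2 := by field_simp
    have h1 := hn f hf
    calc |(∫ y, f y ∂ν) - ∫ y, f y ∂μ|
        = |((∫ y, f y ∂(μ.bind (qidKappa m r))) - ∫ y, f y ∂μ) + t * ∫ y, f y ∂m| := by
          rw [hsplit, hsmul]; ring_nf
      _ ≤ |(∫ y, f y ∂(μ.bind (qidKappa m r))) - ∫ y, f y ∂μ| + |t * ∫ y, f y ∂m| :=
          abs_add_le _ _
      _ < ε / 2 + ε / 2 := by
          have : |(∫ y, f y ∂(μ.bind (qidKappa m r))) - ∫ y, f y ∂μ| < ε / 2 := h1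
          exact add_lt_add_of_lt_of_le this h2
      _ = ε := by ring

end Helpers


lemma tauW_exists_ball {X : Type*} [TopologicalSpace X] [MeasurableSpace X]
    {U : Set (FiniteMeasure X)} (hU : @IsOpen _ (tauW X) U) :
    ∀ μ ∈ U, ∃ (F : Finset (BoundedContinuousFunction X ℝ)) (y : ℝ), 0 < y ∧
      {ν : FiniteMeasure X | ∀ f ∈ F,
        |(∫ x, f x ∂(ν : Measure X)) - ∫ x, f x ∂(μ : Measure X)| < y} ⊆ U := by
  classical
  have hU' : TopologicalSpace.GenerateOpen
      {S | ∃ (m₀ : FiniteMeasure X) (F : Finset (BoundedContinuousFunction X ℝ)) (y : ℝ),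
        0 < y ∧ S = {m : FiniteMeasure X | ∀ f ∈ F,
          |(∫ x, f x ∂(m : Measure X)) - ∫ x, f x ∂(m₀ : Measure X)| < y}} U := hU
  clear hU
  induction hU' with
  | basic S hS =>
      obtain ⟨m₀, F, y, hy, rfl⟩ := hS
      intro μ hμ
      rcases F.eq_empty_or_nonempty with hFe | hFne
      · subst hFe
        exact ⟨∅, 1, one_pos, fun ν _ f hf => absurd hf (Finset.notMem_empty f)⟩
      · set δ := F.inf' hFne fun f =>
          y - |(∫ x, f x ∂(μ : Measure X)) - ∫ x, f x ∂(m₀ : Measure X)| with hδ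
        have hδpos : 0 < δ := by
          rw [hδ, Finset.lt_inf'_iff]
          intro f hf
          have := hμ f hf
          linarith
        refine ⟨F, δ, hδpos, fun ν hν f hf => ?_⟩
        have h1 := hν f hf
        have h2 : δ ≤ y - |(∫ x, f x ∂(μ : Measure X)) - ∫ x, f x ∂(m₀ : Measure X)| := by
          rw [hδ]; exact Finset.inf'_le _ hf
        calc |(∫ x, f x ∂(ν : Measure X)) - ∫ x, f x ∂(m₀ : Measure X)|
            ≤ |(∫ x, f x ∂(ν : Measure X)) - ∫ x, f x ∂(μ : Measure X)|
              + |(∫ x, f x ∂(μ : Measure X)) - ∫ x, f x ∂(m₀ : Measure X)| :=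
            abs_sub_le _ _ _
          _ < y := by linarith
  | univ => exact fun μ _ => ⟨∅, 1, one_pos, fun ν _ => trivial⟩
  | inter U V hUo hVo ihU ihV =>
      intro μ hμ
      obtain ⟨F₁, y₁, hy₁, hsub₁⟩ := ihU μ hμ.1
      obtain ⟨F₂, y₂, hy₂, hsub₂⟩ := ihV μ hμ.2
      refine ⟨F₁ ∪ F₂, min y₁ y₂, lt_min hy₁ hy₂, fun ν hν => ⟨hsub₁ ?_, hsub₂ ?_⟩⟩
      · intro f hf
        exact lt_of_lt_of_le (hν f (Finset.mem_union_left _ hf)) (min_le_left _ _)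
      · intro f hf
        exact lt_of_lt_of_le (hν f (Finset.mem_union_right _ hf)) (min_le_right _ _)
  | sUnion 𝔖 h ih =>
      intro μ hμ
      obtain ⟨s, hs, hμs⟩ := hμ
      obtain ⟨F, y, hy, hsub⟩ := ih s hs μ hμs
      exact ⟨F, y, hy, hsub.trans (Set.subset_sUnion_of_mem hs)⟩


/-- Let `X` be separable metrizable and `G` act on `X` by homeomorphisms with
`⋃_{g∈G} gU = X` for every nonempty open `U`. If there exists a nonzero finite nonnegative
quasi-invariant Borel measure on `X`, then the family `Q⁺(X)` of all finite nonnegative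
quasi-invariant Borel measures is dense in `M⁺(X)` with the weak topology `τ_w`. -/
theorem quasiInvariant_dense_in_weak_topology
    {G X : Type*} [Group G] [MulAction G X]
    [TopologicalSpace X] [TopologicalSpace.MetrizableSpace X] [SeparableSpace X]
    [MeasurableSpace X] [BorelSpace X]
    (hcont : ∀ g : G, Continuous (fun x : X => g • x))
    (hGU : ∀ U : Set X, IsOpen U → U.Nonempty → (⋃ g : G, (fun x : X => g • x) '' U) = Set.univ)
    (hexists : ∃ m : FiniteMeasure X, m ≠ 0 ∧
      ∀ g : G, (m : Measure X).map (fun x : X => g • x) ≪ (m : Measure X) ∧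
        (m : Measure X) ≪ (m : Measure X).map (fun x : X => g • x)) :
    @Dense (FiniteMeasure X) (tauW X)
      {m : FiniteMeasure X |
        ∀ g : G, (m : Measure X).map (fun x : X => g • x) ≪ (m : Measure X) ∧
          (m : Measure X) ≪ (m : Measure X).map (fun x : X => g • x)} := by
  classical
  obtain ⟨m, hm0, hqi⟩ := hexists
  have hkey : ∀ (μ : FiniteMeasure X) (F : Finset (BoundedContinuousFunction X ℝ)) (y : ℝ),
      0 < y → ∃ ν : FiniteMeasure X,
        (∀ g : G, (ν : Measure X).map (fun x : X => g • x) ≪ (ν : Measure X) ∧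
          (ν : Measure X) ≪ (ν : Measure X).map (fun x : X => g • x)) ∧
        ∀ f ∈ F, |(∫ x, f x ∂(ν : Measure X)) - ∫ x, f x ∂(μ : Measure X)| < y := by
    letI : MetricSpace X := TopologicalSpace.metrizableSpaceMetric X
    haveI : SecondCountableTopology X := UniformSpace.secondCountable_of_separable X
    have hsupp : ∀ U : Set X, IsOpen U → U.Nonempty → (m : Measure X) U ≠ 0 := by
      intro U hUo hUne h0
      have himg : ∀ g : G, (fun x : X => g • x) '' U = (fun x : X => g⁻¹ • x) ⁻¹' U := by
        intro g
        ext x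
        constructor
        · rintro ⟨u, hu, rfl⟩
          simpa [inv_smul_smul] using hu
        · intro hx
          exact ⟨g⁻¹ • x, hx, by simp [smul_inv_smul]⟩
      have hopen : ∀ g : G, IsOpen ((fun x : X => g • x) '' U) := by
        intro g
        rw [himg g]
        exact hUo.preimage (hcont g⁻¹)
      have hzero : ∀ g : G, (m : Measure X) ((fun x : X => g • x) '' U) = 0 := by
        intro g
        rw [himg g]
        have hmap : ((m : Measure X).map (fun x : X => g⁻¹ • x)) U
            = (m : Measure X) ((fun x : X => g⁻¹ • x) ⁻¹' U) :=
          Measure.map_apply (hcont g⁻¹).measurable hUo.measurableSet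
        rw [← hmap]
        exact (hqi g⁻¹).1 h0
      obtain ⟨T, hTc, hTU⟩ := TopologicalSpace.isOpen_iUnion_countable
        (fun g : G => (fun x : X => g • x) '' U) hopen
      have huniv : (m : Measure X) Set.univ = 0 := by
        rw [← hGU U hUo hUne, ← hTU]
        exact (measure_biUnion_null_iff hTc).2 fun g _ => hzero g
      exact hm0 (FiniteMeasure.toMeasure_injective
        (by rw [FiniteMeasure.toMeasure_zero]; exact Measure.measure_univ_eq_zero.1 huniv))
    have hball : ∀ (x : X) (r : ℝ), 0 < r → (m : Measure X) (Metric.ball x r) ≠ 0 :=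
      fun x r hr => hsupp _ Metric.isOpen_ball ⟨x, Metric.mem_ball_self hr⟩
    intro μ F y hy
    obtain ⟨ν, hfin, h1, h2, hest⟩ := qid_key (m : Measure X) hball (μ : Measure X) F hy
    refine ⟨⟨ν, hfin⟩, fun g => ⟨?_, ?_⟩, fun f hf => hest f hf⟩
    · exact ((h1.map (hcont g).measurable).trans ((hqi g).1)).trans h2
    · exact (h1.trans ((hqi g).2)).trans (h2.map (hcont g).measurable)
  refine (@dense_iff_inter_open (FiniteMeasure X) (tauW X) _).2 ?_
  intro U hUo hUne
  obtain ⟨μ, hμ⟩ := hUne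
  obtain ⟨F, y, hy, hsub⟩ := tauW_exists_ball hUo μ hμ
  obtain ⟨ν, hQI, hest⟩ := hkey μ F y hy
  exact ⟨ν, hsub (fun f hf => hest f hf), hQI⟩
end

section
/- Let X be a topological space and (E_k)_{k≥1} an increasing sequence of subsets of X with ⋃_k E_k = X, such that a real-valued function on X is continuous if and only if its restriction to each E_k is continuous. Let S₁ = { h ∈ C(X,ℝ) : sup_{x∈X} |h(x)| ≤ 1 } be the closed unit ball of bounded continuous functions, and define D(h,s) = Σ_{k=1}^∞ 2^{-k} sup_{x∈E_k} |h(x) − s(x)| for h, s ∈ S₁. Then D is a metric on S₁ and the metric space (S₁, D) is complete. -/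
open MeasureTheory Filter Topology
set_option linter.unusedSectionVars false
set_option linter.unusedVariables false

/-- The closed unit ball `S₁` of bounded continuous real functions on `X`. -/
def UnitBallC (X : Type*) [TopologicalSpace X] : Type _ :=
  {h : C(X, ℝ) // ∀ x : X, |h x| ≤ 1}

/-- The metric `D(h,s) = Σ_{k=1}^∞ 2^{-k} sup_{x ∈ E_k} |h(x) − s(x)|` on `S₁`
(here `E : ℕ → Set X` with `E k` playing the role of `E_{k+1}`). -/
noncomputable def D16 {X : Type*} [TopologicalSpace X] (E : ℕ → Set X)
    (h s : UnitBallC X) : ℝ :=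
  ∑' k : ℕ, ((1 : ℝ) / 2) ^ (k + 1) * ⨆ x : E k, |h.1 x.1 - s.1 x.1|


namespace D16aux

variable {X : Type*} [TopologicalSpace X]

noncomputable def M (E : ℕ → Set X) (k : ℕ) (f g : X → ℝ) : ℝ :=
  ⨆ x : E k, |f x.1 - g x.1|

lemma D16_eq (E : ℕ → Set X) (h s : UnitBallC X) :
    D16 E h s = ∑' k : ℕ, ((1 : ℝ) / 2) ^ (k + 1) * M E k h.1 s.1 := rfl

lemma bddM (E : ℕ → Set X) (k : ℕ) {f g : X → ℝ} (hf : ∀ x, |f x| ≤ 1)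
    (hg : ∀ x, |g x| ≤ 1) :
    BddAbove (Set.range fun x : E k => |f x.1 - g x.1|) := by
  refine ⟨2, ?_⟩
  rintro _ ⟨x, rfl⟩
  calc |f x.1 - g x.1| ≤ |f x.1| + |g x.1| := abs_sub _ _
    _ ≤ 1 + 1 := add_le_add (hf _) (hg _)
    _ = 2 := by norm_num

lemma M_nonneg (E : ℕ → Set X) (k : ℕ) (f g : X → ℝ) : 0 ≤ M E k f g :=
  Real.iSup_nonneg fun x => abs_nonneg _

lemma M_le (E : ℕ → Set X) (k : ℕ) {f g : X → ℝ} {c : ℝ}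
    (h : ∀ x ∈ E k, |f x - g x| ≤ c) (hc : 0 ≤ c) : M E k f g ≤ c :=
  Real.iSup_le (fun x => h x.1 x.2) hc

lemma M_le_two (E : ℕ → Set X) (k : ℕ) {f g : X → ℝ} (hf : ∀ x, |f x| ≤ 1)
    (hg : ∀ x, |g x| ≤ 1) : M E k f g ≤ 2 := by
  refine M_le E k (fun x _ => ?_) (by norm_num)
  calc |f x - g x| ≤ |f x| + |g x| := abs_sub _ _
    _ ≤ 1 + 1 := add_le_add (hf _) (hg _)
    _ = 2 := by norm_num

lemma le_M (E : ℕ → Set X) (k : ℕ) {f g : X → ℝ} (hf : ∀ x, |f x| ≤ 1)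
    (hg : ∀ x, |g x| ≤ 1) {x : X} (hx : x ∈ E k) :
    |f x - g x| ≤ M E k f g :=
  le_ciSup (bddM E k hf hg) (⟨x, hx⟩ : E k)

lemma summableD (E : ℕ → Set X) {f g : X → ℝ} (hf : ∀ x, |f x| ≤ 1)
    (hg : ∀ x, |g x| ≤ 1) :
    Summable (fun k => ((1 : ℝ) / 2) ^ (k + 1) * M E k f g) := by
  refine Summable.of_nonneg_of_le (fun k => ?_) (fun k => ?_)
    (((summable_nat_add_iff 1).mpr (summable_geometric_two.mul_right 2)))
  · exact mul_nonneg (by positivity) (M_nonneg E k f g)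
  · exact mul_le_mul_of_nonneg_left (M_le_two E k hf hg) (by positivity)

lemma term_le_D16 (E : ℕ → Set X) (h s : UnitBallC X) (k : ℕ) :
    ((1 : ℝ) / 2) ^ (k + 1) * M E k h.1 s.1 ≤ D16 E h s := by
  rw [D16_eq]
  exact Summable.le_tsum (summableD E h.2 s.2) k
    (fun i _ => mul_nonneg (by positivity) (M_nonneg E i _ _))

lemma M_lt_of_D_lt {E : ℕ → Set X} {k : ℕ} {h s : UnitBallC X} {ε : ℝ}
    (hd : D16 E h s < ε * ((1 : ℝ) / 2) ^ (k + 1)) : M E k h.1 s.1 < ε := by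
  have hw : (0 : ℝ) < ((1 : ℝ) / 2) ^ (k + 1) := by positivity
  have := lt_of_le_of_lt (term_le_D16 E h s k) hd
  rw [mul_comm] at this
  exact lt_of_mul_lt_mul_right this hw.le

lemma D16_nonneg (E : ℕ → Set X) (h s : UnitBallC X) : 0 ≤ D16 E h s :=
  tsum_nonneg fun k => mul_nonneg (by positivity) (M_nonneg E k _ _)

end D16aux

open D16aux in
set_option maxHeartbeats 1000000 in
/-- Let `X` be a topological space and `(E_k)` an increasing sequence of
subsets with union `X` such that a real function on `X` is continuous iff its restriction to
each `E_k` is continuous. Then `D` is a metric on the closed unit ball `S₁` of bounded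
continuous functions and `(S₁, D)` is a complete metric space (every `D`-Cauchy sequence
`D`-converges). -/
theorem D16_metric_and_complete
    {X : Type*} [TopologicalSpace X] (E : ℕ → Set X)
    (hmono : Monotone E) (hunion : (⋃ k, E k) = Set.univ)
    (hcontiff : ∀ h : X → ℝ, Continuous h ↔ ∀ k, Continuous ((E k).restrict h)) :
    (∀ h s : UnitBallC X, D16 E h s = 0 ↔ h = s) ∧
    (∀ h s : UnitBallC X, D16 E h s = D16 E s h) ∧
    (∀ h s u : UnitBallC X, D16 E h u ≤ D16 E h s + D16 E s u) ∧
    (∀ u : ℕ → UnitBallC X,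
      (∀ ε : ℝ, 0 < ε → ∃ N : ℕ, ∀ j ≥ N, ∀ l ≥ N, D16 E (u j) (u l) < ε) →
      ∃ h : UnitBallC X, ∀ ε : ℝ, 0 < ε → ∃ N : ℕ, ∀ n ≥ N, D16 E (u n) h < ε) := by
  refine ⟨?_, ?_, ?_, ?_⟩
  · -- D = 0 ↔ eq
    intro h s
    constructor
    · intro hD
      have hM : ∀ k, M E k h.1 s.1 = 0 := by
        intro k
        have hle : ((1 : ℝ) / 2) ^ (k + 1) * M E k h.1 s.1 ≤ 0 :=
          hD ▸ term_le_D16 E h s k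
        have hw : (0 : ℝ) < ((1 : ℝ) / 2) ^ (k + 1) := by positivity
        have hM0 : M E k h.1 s.1 ≤ 0 := by nlinarith [M_nonneg E k (⇑h.1) (⇑s.1)]
        exact le_antisymm hM0 (M_nonneg E k _ _)
      have heq : ∀ x : X, h.1 x = s.1 x := by
        intro x
        have hx : x ∈ ⋃ k, E k := hunion ▸ Set.mem_univ x
        obtain ⟨_, ⟨k, rfl⟩, hxk⟩ := hx
        have := le_M E k h.2 s.2 hxk
        rw [hM k] at this
        have h0 : |h.1 x - s.1 x| = 0 := le_antisymm this (abs_nonneg _)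
        have := abs_eq_zero.mp h0
        linarith [sub_eq_zero.mp this]
      exact Subtype.ext (ContinuousMap.ext heq)
    · rintro rfl
      rw [D16_eq]
      have : ∀ k, M E k h.1 h.1 = 0 := fun k =>
        le_antisymm (M_le E k (fun x _ => by simp) le_rfl) (M_nonneg E k _ _)
      simp [this]
  · -- symmetry
    intro h s
    rw [D16_eq, D16_eq]
    refine tsum_congr fun k => ?_
    congr 1
    unfold M
    congr 1
    ext x
    exact abs_sub_comm _ _
  · -- triangle
    intro h s u
    rw [D16_eq, D16_eq, D16_eq, ← Summable.tsum_add (summableD E h.2 s.2) (summableD E s.2 u.2)]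
    refine Summable.tsum_le_tsum (fun k => ?_) (summableD E h.2 u.2)
      ((summableD E h.2 s.2).add (summableD E s.2 u.2))
    rw [← mul_add]
    refine mul_le_mul_of_nonneg_left ?_ (by positivity)
    refine M_le E k (fun x hx => ?_)
      (add_nonneg (M_nonneg E k _ _) (M_nonneg E k _ _))
    calc |h.1 x - u.1 x| ≤ |h.1 x - s.1 x| + |s.1 x - u.1 x| := abs_sub_le _ _ _
      _ ≤ _ := add_le_add (le_M E k h.2 s.2 hx) (le_M E k s.2 u.2 hx)
  · -- completeness
    intro u hc
    have ptC : ∀ x : X, CauchySeq (fun n => (u n).1 x) := by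
      intro x
      have hx : x ∈ ⋃ k, E k := hunion ▸ Set.mem_univ x
      obtain ⟨_, ⟨k, rfl⟩, hxk⟩ := hx
      rw [Metric.cauchySeq_iff]
      intro ε hε
      obtain ⟨N, hN⟩ := hc (ε * ((1:ℝ)/2)^(k+1)) (by positivity)
      refine ⟨N, fun j hj l hl => ?_⟩
      have h1 : M E k (u j).1 (u l).1 < ε := M_lt_of_D_lt (hN j hj l hl)
      rw [Real.dist_eq]
      exact lt_of_le_of_lt (le_M E k (u j).2 (u l).2 hxk) h1
    choose g hg using fun x => cauchySeq_tendsto_of_complete (ptC x)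
    have hUC : ∀ k, TendstoUniformlyOn (fun n => ((u n).1 : X → ℝ)) g atTop (E k) := by
      intro k
      refine UniformCauchySeqOn.tendstoUniformlyOn_of_tendsto ?_ (fun x _ => hg x)
      rw [Metric.uniformCauchySeqOn_iff]
      intro ε hε
      obtain ⟨N, hN⟩ := hc (ε * ((1:ℝ)/2)^(k+1)) (by positivity)
      refine ⟨N, fun j hj l hl x hx => ?_⟩
      have h1 : M E k (u j).1 (u l).1 < ε := M_lt_of_D_lt (hN j hj l hl)
      rw [Real.dist_eq]
      exact lt_of_le_of_lt (le_M E k (u j).2 (u l).2 hx) h1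
    have hgcont : Continuous g := by
      rw [hcontiff]
      intro k
      refine continuousOn_iff_continuous_domRestrict.mp ?_
      exact (hUC k).continuousOn
        (Filter.Eventually.of_forall fun n => ((u n).1.continuous).continuousOn).frequently
    have hgle : ∀ x, |g x| ≤ 1 := fun x =>
      le_of_tendsto ((continuous_abs.tendsto _).comp (hg x))
        (Filter.Eventually.of_forall fun n => (u n).2 x)
    set h : UnitBallC X := ⟨⟨g, hgcont⟩, hgle⟩ with hh
    refine ⟨h, ?_⟩
    intro ε hε
    obtain ⟨K, hK⟩ : ∃ K : ℕ, ((1:ℝ)/2)^K < ε/4 :=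
      exists_pow_lt_of_lt_one (by positivity) (by norm_num)
    set ε'' := ε / (4*((K:ℝ)+1)) with hε''
    have hε''pos : 0 < ε'' := by positivity
    obtain ⟨N, hN⟩ := hc ε'' hε''pos
    refine ⟨N, fun n hn => ?_⟩
    have key : ∀ k, M E k (u n).1 h.1 ≤ 2^(k+1) * ε'' := by
      intro k
      refine M_le E k (fun x hx => ?_) (by positivity)
      have hlim : Tendsto (fun l => |(u n).1 x - (u l).1 x|) atTop
          (𝓝 |(u n).1 x - g x|) :=
        (continuous_abs.tendsto _).comp ((hg x).const_sub ((u n).1 x))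
      show |(u n).1 x - g x| ≤ 2^(k+1) * ε''
      refine le_of_tendsto hlim (Filter.eventually_atTop.mpr ⟨N, fun l hl => ?_⟩)
      have h1 : M E k (u n).1 (u l).1 < 2^(k+1) * ε'' := by
        refine M_lt_of_D_lt ?_
        have heq : (2:ℝ)^(k+1) * ε'' * ((1:ℝ)/2)^(k+1) = ε'' := by
          rw [mul_comm ((2:ℝ)^(k+1)) ε'', mul_assoc, ← mul_pow]
          norm_num
        rw [heq]; exact hN n hn l hl
      exact le_of_lt (lt_of_le_of_lt (le_M E k (u n).2 (u l).2 hx) h1)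
    have hsum := summableD E (u n).2 h.2
    rw [D16_eq, ← Summable.sum_add_tsum_nat_add K hsum]
    have hfin : ∑ k ∈ Finset.range K, ((1:ℝ)/2)^(k+1) * M E k (u n).1 h.1
        ≤ (K:ℝ) * ε'' := by
      calc ∑ k ∈ Finset.range K, ((1:ℝ)/2)^(k+1) * M E k (u n).1 h.1
          ≤ ∑ k ∈ Finset.range K, ε'' := by
            refine Finset.sum_le_sum fun k _ => ?_
            calc ((1:ℝ)/2)^(k+1) * M E k (u n).1 h.1
                ≤ ((1:ℝ)/2)^(k+1) * (2^(k+1)*ε'') :=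
                  mul_le_mul_of_nonneg_left (key k) (by positivity)
              _ = ε'' := by rw [← mul_assoc, ← mul_pow]; norm_num
        _ = (K:ℝ) * ε'' := by rw [Finset.sum_const, Finset.card_range, nsmul_eq_mul]
    have hcalc : ∀ k : ℕ, ((1:ℝ)/2)^((k+K)+1) * 2 = ((1:ℝ)/2)^k * (((1:ℝ)/2)^(K+1) * 2) := by
      intro k
      rw [show (k+K)+1 = k + (K+1) by ring, pow_add]
      ring
    have htail : ∑' k : ℕ, ((1:ℝ)/2)^((k+K)+1) * M E (k+K) (u n).1 h.1
        ≤ 2 * ((1:ℝ)/2)^K := by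
      have hs2 : Summable (fun k : ℕ => ((1:ℝ)/2)^((k+K)+1) * 2) := by
        simp_rw [hcalc]
        exact summable_geometric_two.mul_right _
      calc ∑' k : ℕ, ((1:ℝ)/2)^((k+K)+1) * M E (k+K) (u n).1 h.1
          ≤ ∑' k : ℕ, ((1:ℝ)/2)^((k+K)+1) * 2 :=
            Summable.tsum_le_tsum (fun k => mul_le_mul_of_nonneg_left
              (M_le_two E _ (u n).2 h.2) (by positivity))
              ((summable_nat_add_iff K).mpr hsum) hs2
        _ = ∑' k : ℕ, ((1:ℝ)/2)^k * (((1:ℝ)/2)^(K+1) * 2) := by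
            exact tsum_congr hcalc
        _ = 2 * (((1:ℝ)/2)^(K+1) * 2) := by rw [tsum_mul_right, tsum_geometric_two]
        _ = 2 * ((1:ℝ)/2)^K := by rw [pow_succ]; ring
    have hKle : (K:ℝ) * ε'' ≤ ε/4 := by
      have hKK : (K:ℝ) / ((K:ℝ)+1) ≤ 1 := by
        rw [div_le_one (by positivity)]
        linarith only [Nat.cast_nonneg (α := ℝ) K]
      calc (K:ℝ) * ε'' = (K:ℝ)/((K:ℝ)+1) * (ε/4) := by
            rw [hε'', mul_div_assoc', div_mul_div_comm, mul_comm ((K:ℝ)+1) 4]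
        _ ≤ 1 * (ε/4) := mul_le_mul_of_nonneg_right hKK (by positivity)
        _ = ε/4 := one_mul _
    have hKpow : 2 * ((1:ℝ)/2)^K < ε/2 := by linarith only [hK]
    linarith only [hfin, htail, hKle, hKpow, hε]
end
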